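/- arXiv:1107.0848 — 2 statements merged into one kernel-verified Lean document; each statement's English description precedes it below -/
import Mathlib

section
/- In the n-door game (n ≥ 3) in which Monte reveals n−2 doors at once, for every Conie strategy (x, d) there exists a door u : Fin n such that for every Monte strategy m and every prize door p, Conie's final choice z is never equal to u; in particular she loses whenever p = u. -/
/-- `n`-door game, `n - 2` doors revealed at once. The door Monte offers: if
Conie's guess `x` equals the prize door `p`, Monte offers `m p`; otherwise he
is forced to reveal all doors other than `x` and `p`, so the offer is `p`. -/
def offered {n : ℕ} (m : Fin n → Fin n) (x p : Fin n) : Fin n :=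
  if p = x then m p else p

/-- Conie's final choice given her strategy `(x, d)`, Monte's strategy `m`
and prize door `p`. -/
def finalChoice {n : ℕ} (x : Fin n) (d : Fin n → Bool) (m : Fin n → Fin n) (p : Fin n) :
    Fin n :=
  if d (offered m x p) then offered m x p else x

/-- In the `n`-door game (`n ≥ 3`) with `n - 2` doors revealed at once, for
every Conie strategy `(x, d)` there is a door `u` that is never her final
choice, whatever Monte's strategy and prize location; in particular she loses
whenever `p = u`. -/
theorem exists_never_chosen_door_n (n : ℕ) (hn : 3 ≤ n)
    (x : Fin n) (d : Fin n → Bool) :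
    ∃ u : Fin n,
      (∀ (m : Fin n → Fin n), (∀ v, m v ≠ v) →
        ∀ p : Fin n, finalChoice x d m p ≠ u) ∧
      (∀ (m : Fin n → Fin n), (∀ v, m v ≠ v) →
        ∀ p : Fin n, p = u → finalChoice x d m p ≠ p) := by
  have key : ∃ u : Fin n, ∀ (m : Fin n → Fin n), (∀ v, m v ≠ v) →
      ∀ p : Fin n, finalChoice x d m p ≠ u := by
    by_cases h : ∃ u, u ≠ x ∧ d u = false
    · obtain ⟨u, hux, hdu⟩ := h
      refine ⟨u, fun m hm p => ?_⟩
      unfold finalChoice offered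
      split_ifs with hpx hd hd
      · intro hc; rw [hc, hdu] at hd; exact Bool.false_ne_true hd
      · exact fun hc => hux hc.symm
      · intro hc; rw [hc, hdu] at hd; exact Bool.false_ne_true hd
      · exact fun hc => hux hc.symm
    · push_neg at h
      have h' : ∀ u : Fin n, u ≠ x → d u = true := by
        intro u hu
        rcases Bool.eq_false_or_eq_true (d u) with h1 | h1
        · exact h1
        · exact absurd h1 (h u hu)
      refine ⟨x, fun m hm p => ?_⟩
      unfold finalChoice offered
      split_ifs with hpx hd hd
      · subst hpx; exact hm p
      · subst hpx; exact absurd (h' (m p) (hm p)) (by simpa using hd)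
      · exact hpx
      · exact absurd (h' p hpx) (by simpa using hd)
  obtain ⟨u, hu⟩ := key
  exact ⟨u, hu, fun m hm p hp => by subst hp; exact hu m hm p⟩
end

section
/- In the n-door game (n ≥ 3) in which Monte reveals n−2 doors at once, for any initial choice x : Fin n, the always-switching strategy (x, fun _ => true) wins if and only if the prize door p is different from x, regardless of Monte's strategy m; consequently, for every Monte strategy m, the set of prize doors p for which this strategy wins has exactly n−1 elements, and no Conie strategy wins for more than n−1 prize doors against any fixed Monte strategy. -/
/-- In the `n`-door game (`n ≥ 3`) with `n - 2` doors revealed at once: any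
always-switching strategy wins exactly when the prize is not behind the
initially chosen door, whatever Monte's strategy; it wins for exactly `n - 1`
prize doors; and no Conie strategy wins for more than `n - 1` prize doors
against any fixed Monte strategy. -/
theorem always_switch_optimal_n (n : ℕ) (hn : 3 ≤ n) (x : Fin n) :
    (∀ (m : Fin n → Fin n), (∀ v, m v ≠ v) →
      ∀ p : Fin n, (finalChoice x (fun _ => true) m p = p ↔ p ≠ x)) ∧
    (∀ (m : Fin n → Fin n), (∀ v, m v ≠ v) →
      (Finset.univ.filter (fun p => finalChoice x (fun _ => true) m p = p)).card = n - 1) ∧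
    (∀ (x' : Fin n) (d : Fin n → Bool) (m : Fin n → Fin n), (∀ v, m v ≠ v) →
      (Finset.univ.filter (fun p => finalChoice x' d m p = p)).card ≤ n - 1) := by
  have key : ∀ (m : Fin n → Fin n), (∀ v, m v ≠ v) →
      ∀ p : Fin n, (finalChoice x (fun _ => true) m p = p ↔ p ≠ x) := by
    intro m hm p
    by_cases h : p = x
    · subst h
      simp [finalChoice, offered, hm p]
    · simp [finalChoice, offered, h]
  refine ⟨key, ?_, ?_⟩
  · intro m hm
    have : (Finset.univ.filter (fun p => finalChoice x (fun _ => true) m p = p))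
        = Finset.univ.erase x := by
      ext p
      simp [key m hm p, Finset.mem_erase]
    rw [this, Finset.card_erase_of_mem (Finset.mem_univ x), Finset.card_univ, Fintype.card_fin]
  · intro x' d m hm
    have hlose : ∃ p : Fin n, finalChoice x' d m p ≠ p := by
      by_cases hd : d (m x') = true
      · refine ⟨x', ?_⟩
        simp [finalChoice, offered, hd]
        exact hm x'
      · refine ⟨m x', ?_⟩
        have hne : m x' ≠ x' := hm x'
        simp [finalChoice, offered, hne, hd]
        intro h
        exact hne h.symm
    obtain ⟨p0, hp0⟩ := hlose
    have hsub : (Finset.univ.filter (fun p => finalChoice x' d m p = p))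
        ⊆ Finset.univ.erase p0 := by
      intro p hp
      simp only [Finset.mem_filter, Finset.mem_univ, true_and] at hp
      refine Finset.mem_erase.2 ⟨?_, Finset.mem_univ p⟩
      rintro rfl; exact hp0 hp
    calc (Finset.univ.filter (fun p => finalChoice x' d m p = p)).card
        ≤ (Finset.univ.erase p0).card := Finset.card_le_card hsub
      _ = n - 1 := by
          rw [Finset.card_erase_of_mem (Finset.mem_univ p0), Finset.card_univ, Fintype.card_fin]
end
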